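/- One-step preservation of concavity by the Bellman operator. If v : S × B → ℝ is bounded and, for every s ∈ S, the function b ↦ v(s, b) is concave on B (i.e. v(s, t • b₁ + (1 − t) • b₂) ≥ t * v(s, b₁) + (1 − t) * v(s, b₂) for all b₁, b₂ ∈ B and t ∈ [0, 1]), then for every s ∈ S the function b ↦ (Hv)(s, b) is also concave on B. -/

import Mathlib

open Finset

/-- The belief simplex over the modulation space `M`. -/
abbrev Belief (M : Type) [Fintype M] : Type :=
  {b : M → ℝ // (∀ μ, 0 ≤ b μ) ∧ ∑ μ, b μ = 1}

/-- A finite SEP-POMDP: feasible action sets, cost function, state transition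
probabilities, modulation/observation probabilities, and a discount factor. -/
structure SEP (S Y M A : Type) [Fintype S] [Fintype Y] [Fintype M] [Fintype A] where
  act : S → Finset A
  act_ne : ∀ s, (act s).Nonempty
  c : S → Y → A → ℝ
  p : Y → S → A → S → ℝ
  p_nonneg : ∀ y' s a s', 0 ≤ p y' s a s'
  p_sum : ∀ y' s a, ∑ s', p y' s a s' = 1
  Q : M → Y → M → ℝ
  Q_nonneg : ∀ μ y' μ', 0 ≤ Q μ y' μ'
  Q_sum : ∀ μ, ∑ y', ∑ μ', Q μ y' μ' = 1
  β : ℝ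
  β_nonneg : 0 ≤ β
  β_lt_one : β < 1

namespace SEP

variable {S Y M A : Type} [Fintype S] [Fintype Y] [Fintype M] [Fintype A]

/-- `σ(y' | b) = ∑ μ, ∑ μ', b μ * Q μ y' μ'`. -/
def sig (P : SEP S Y M A) (b : Belief M) (y' : Y) : ℝ :=
  ∑ μ, ∑ μ', b.1 μ * P.Q μ y' μ'

/-- The Bayesian belief update `λ(y', b)`. -/
noncomputable def lam (P : SEP S Y M A) (y' : Y) (b : Belief M) : Belief M :=
  if h : 0 < P.sig b y' then
    ⟨fun μ' => (∑ μ, b.1 μ * P.Q μ y' μ') / P.sig b y',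
      fun μ' => div_nonneg (Finset.sum_nonneg fun μ _ =>
        mul_nonneg (b.2.1 μ) (P.Q_nonneg μ y' μ')) h.le,
      by
        rw [← Finset.sum_div, Finset.sum_comm]
        exact div_self (ne_of_gt h)⟩
  else b

/-- `h_{y'}(s, a, v̄) = c s y' a + β * ∑ s', p y' s a s' * v̄ s'`. -/
def hy (P : SEP S Y M A) (y' : Y) (s : S) (a : A) (vb : S → ℝ) : ℝ :=
  P.c s y' a + P.β * ∑ s', P.p y' s a s' * vb s'

/-- The Bellman operator `H` of the SEP-POMDP. -/
noncomputable def H (P : SEP S Y M A) (v : S → Belief M → ℝ) (s : S) (b : Belief M) : ℝ :=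
  (P.act s).inf' (P.act_ne s) fun a =>
    ∑ y', P.sig b y' * P.hy y' s a fun s' => v s' (P.lam y' b)

/-- Boundedness of a function `v : S × B → ℝ`. -/
def Bdd (v : S → Belief M → ℝ) : Prop :=
  ∃ C, ∀ s b, |v s b| ≤ C

end SEP


/-- Pointwise convex combination `t • b₁ + (1 - t) • b₂` of two beliefs. -/
def Belief.conv {M : Type} [Fintype M] (t : ℝ) (ht0 : 0 ≤ t) (ht1 : t ≤ 1)
    (b₁ b₂ : Belief M) : Belief M :=
  ⟨fun μ => t * b₁.1 μ + (1 - t) * b₂.1 μ,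
    fun μ => add_nonneg (mul_nonneg ht0 (b₁.2.1 μ))
      (mul_nonneg (by linarith) (b₂.2.1 μ)),
    by
      rw [Finset.sum_add_distrib, ← Finset.mul_sum, ← Finset.mul_sum, b₁.2.2, b₂.2.2]
      ring⟩

/-! `σ(· | b)` and the unnormalised posterior `σ(y' | b) λ(y', b)` are linear in `b`, so
`b ↦ σ(y' | b) f(λ(y', b))` is the perspective of `f` and is concave whenever `f` is. The map
`b ↦ (H v)(s, b)` is a minimum over actions of nonnegative combinations of such perspectives
(of the constants `c s y' a` and of the functions `v s'`), hence concave. -/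

namespace Belief

variable {M : Type} [Fintype M]

def IsConcave (f : Belief M → ℝ) : Prop :=
  ∀ (b₁ b₂ : Belief M) (t : ℝ) (ht0 : 0 ≤ t) (ht1 : t ≤ 1),
    t * f b₁ + (1 - t) * f b₂ ≤ f (Belief.conv t ht0 ht1 b₁ b₂)

theorem isConcave_const (c : ℝ) : IsConcave fun _ : Belief M => c :=
  fun _ _ t _ _ => le_of_eq (by ring)

namespace IsConcave

variable {f g : Belief M → ℝ}

theorem add (hf : IsConcave f) (hg : IsConcave g) : IsConcave (f + g) := by
  intro b₁ b₂ t ht0 ht1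
  have := hf b₁ b₂ t ht0 ht1
  have := hg b₁ b₂ t ht0 ht1
  simp only [Pi.add_apply]
  linarith

theorem const_mul (hf : IsConcave f) {c : ℝ} (hc : 0 ≤ c) : IsConcave fun b => c * f b := by
  intro b₁ b₂ t ht0 ht1
  calc t * (c * f b₁) + (1 - t) * (c * f b₂) = c * (t * f b₁ + (1 - t) * f b₂) := by ring
    _ ≤ c * f (conv t ht0 ht1 b₁ b₂) := mul_le_mul_of_nonneg_left (hf b₁ b₂ t ht0 ht1) hc

theorem sum {ι : Type*} {s : Finset ι} {f : ι → Belief M → ℝ} (hf : ∀ i ∈ s, IsConcave (f i)) :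
    IsConcave fun b => ∑ i ∈ s, f i b := by
  intro b₁ b₂ t ht0 ht1
  rw [Finset.mul_sum, Finset.mul_sum, ← Finset.sum_add_distrib]
  exact Finset.sum_le_sum fun i hi => hf i hi b₁ b₂ t ht0 ht1

theorem finset_inf' {ι : Type*} {s : Finset ι} (hs : s.Nonempty) {f : ι → Belief M → ℝ}
    (hf : ∀ i ∈ s, IsConcave (f i)) : IsConcave fun b => s.inf' hs fun i => f i b := by
  intro b₁ b₂ t ht0 ht1
  refine Finset.le_inf' hs _ fun i hi => ?_
  calc t * s.inf' hs (fun i => f i b₁) + (1 - t) * s.inf' hs (fun i => f i b₂)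
      ≤ t * f i b₁ + (1 - t) * f i b₂ :=
        add_le_add (mul_le_mul_of_nonneg_left (Finset.inf'_le _ hi) ht0)
          (mul_le_mul_of_nonneg_left (Finset.inf'_le _ hi) (sub_nonneg.mpr ht1))
    _ ≤ f i (conv t ht0 ht1 b₁ b₂) := hf i hi b₁ b₂ t ht0 ht1

end IsConcave

@[simp]
theorem conv_apply (t : ℝ) (ht0 : 0 ≤ t) (ht1 : t ≤ 1) (b₁ b₂ : Belief M) (μ : M) :
    (conv t ht0 ht1 b₁ b₂).1 μ = t * b₁.1 μ + (1 - t) * b₂.1 μ :=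
  rfl

theorem sum_conv_mul (t : ℝ) (ht0 : 0 ≤ t) (ht1 : t ≤ 1) (b₁ b₂ : Belief M) (w : M → ℝ) :
    ∑ μ, (conv t ht0 ht1 b₁ b₂).1 μ * w μ
      = t * ∑ μ, b₁.1 μ * w μ + (1 - t) * ∑ μ, b₂.1 μ * w μ := by
  simp only [conv_apply, add_mul, Finset.sum_add_distrib, Finset.mul_sum, mul_assoc]

end Belief

namespace SEP

variable {S Y M A : Type} [Fintype S] [Fintype Y] [Fintype M] [Fintype A] (P : SEP S Y M A)

theorem sig_nonneg (b : Belief M) (y' : Y) : 0 ≤ P.sig b y' :=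
  Finset.sum_nonneg fun μ _ => Finset.sum_nonneg fun μ' _ =>
    mul_nonneg (b.2.1 μ) (P.Q_nonneg μ y' μ')

theorem sig_conv (t : ℝ) (ht0 : 0 ≤ t) (ht1 : t ≤ 1) (b₁ b₂ : Belief M) (y' : Y) :
    P.sig (Belief.conv t ht0 ht1 b₁ b₂) y' = t * P.sig b₁ y' + (1 - t) * P.sig b₂ y' := by
  simp only [sig, ← Finset.mul_sum, Belief.sum_conv_mul]

/-- Also when `σ(y' | b) = 0`, where `λ(y', b) = b` is a junk value: the right side vanishes too. -/
theorem sig_mul_lam (b : Belief M) (y' : Y) (μ' : M) :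
    P.sig b y' * (P.lam y' b).1 μ' = ∑ μ, b.1 μ * P.Q μ y' μ' := by
  rcases (P.sig_nonneg b y').eq_or_lt with h0 | h0
  · have hsum : ∑ μ', ∑ μ, b.1 μ * P.Q μ y' μ' = 0 := by rw [Finset.sum_comm]; exact h0.symm
    rw [← h0, zero_mul, eq_comm]
    exact (Finset.sum_eq_zero_iff_of_nonneg (fun μ' _ => Finset.sum_nonneg fun μ _ =>
      mul_nonneg (b.2.1 μ) (P.Q_nonneg μ y' μ'))).mp hsum μ' (Finset.mem_univ μ')
  · rw [lam, dif_pos h0]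
    exact mul_div_cancel₀ _ h0.ne'

theorem lam_conv {t : ℝ} (ht0 : 0 ≤ t) (ht1 : t ≤ 1) (b₁ b₂ : Belief M) (y' : Y) {τ : ℝ}
    (hτ0 : 0 ≤ τ) (hτ1 : τ ≤ 1) (hσ : 0 < P.sig (Belief.conv t ht0 ht1 b₁ b₂) y')
    (hτ : τ * P.sig (Belief.conv t ht0 ht1 b₁ b₂) y' = t * P.sig b₁ y') :
    P.lam y' (Belief.conv t ht0 ht1 b₁ b₂)
      = Belief.conv τ hτ0 hτ1 (P.lam y' b₁) (P.lam y' b₂) := by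
  refine Subtype.ext (funext fun μ' => mul_left_cancel₀ hσ.ne' ?_)
  have hconv := P.sig_conv t ht0 ht1 b₁ b₂ y'
  have h₁ := P.sig_mul_lam b₁ y' μ'
  have h₂ := P.sig_mul_lam b₂ y' μ'
  rw [sig_mul_lam, Belief.sum_conv_mul, Belief.conv_apply]
  linear_combination -(P.lam y' b₂).1 μ' * hconv - ((P.lam y' b₁).1 μ' - (P.lam y' b₂).1 μ') * hτ
    - t * h₁ - (1 - t) * h₂

theorem _root_.Belief.IsConcave.sig_mul_comp_lam {f : Belief M → ℝ} (hf : Belief.IsConcave f) (y' : Y) :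
    Belief.IsConcave fun b => P.sig b y' * f (P.lam y' b) := by
  intro b₁ b₂ t ht0 ht1
  dsimp only
  set b := Belief.conv t ht0 ht1 b₁ b₂
  have hconv : P.sig b y' = t * P.sig b₁ y' + (1 - t) * P.sig b₂ y' := P.sig_conv ..
  have h₁ : 0 ≤ t * P.sig b₁ y' := mul_nonneg ht0 (P.sig_nonneg ..)
  have h₂ : 0 ≤ (1 - t) * P.sig b₂ y' := mul_nonneg (by linarith) (P.sig_nonneg ..)
  rcases (P.sig_nonneg b y').eq_or_lt with h0 | h0
  · have e₁ : t * P.sig b₁ y' = 0 := by linarith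
    have e₂ : (1 - t) * P.sig b₂ y' = 0 := by linarith
    rw [← mul_assoc, ← mul_assoc, e₁, e₂, ← h0]
    simp
  · set τ := t * P.sig b₁ y' / P.sig b y'
    have hτ : τ * P.sig b y' = t * P.sig b₁ y' := div_mul_cancel₀ _ h0.ne'
    have hτ0 : 0 ≤ τ := div_nonneg h₁ h0.le
    have hτ1 : τ ≤ 1 := (div_le_one h0).mpr (by linarith)
    clear_value τ
    calc t * (P.sig b₁ y' * f (P.lam y' b₁)) + (1 - t) * (P.sig b₂ y' * f (P.lam y' b₂))
        = P.sig b y' * (τ * f (P.lam y' b₁) + (1 - τ) * f (P.lam y' b₂)) := by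
          linear_combination (f (P.lam y' b₂) - f (P.lam y' b₁)) * hτ - f (P.lam y' b₂) * hconv
      _ ≤ P.sig b y' * f (Belief.conv τ hτ0 hτ1 (P.lam y' b₁) (P.lam y' b₂)) :=
          mul_le_mul_of_nonneg_left (hf _ _ τ hτ0 hτ1) h0.le
      _ = P.sig b y' * f (P.lam y' b) := by rw [P.lam_conv ht0 ht1 b₁ b₂ y' hτ0 hτ1 h0 hτ]

variable {P} {v : S → Belief M → ℝ}

theorem isConcave_sig_mul_hy (hv : ∀ s', Belief.IsConcave (v s')) (y' : Y) (s : S) (a : A) :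
    Belief.IsConcave fun b => P.sig b y' * P.hy y' s a fun s' => v s' (P.lam y' b) := by
  have hsplit : (fun b => P.sig b y' * P.hy y' s a fun s' => v s' (P.lam y' b))
      = (fun b => P.sig b y' * (fun _ => P.c s y' a) (P.lam y' b))
        + fun b => P.β * ∑ s', P.p y' s a s' * (P.sig b y' * v s' (P.lam y' b)) := by
    funext b
    simp only [hy, Pi.add_apply, mul_add, Finset.mul_sum]
    congr 1
    exact Finset.sum_congr rfl fun s' _ => by ring
  rw [hsplit]
  exact (Belief.IsConcave.sig_mul_comp_lam P (Belief.isConcave_const _) y').add <|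
    (Belief.IsConcave.sum fun s' _ =>
      ((hv s').sig_mul_comp_lam P y').const_mul (P.p_nonneg y' s a s')).const_mul P.β_nonneg

theorem isConcave_H (hv : ∀ s', Belief.IsConcave (v s')) (s : S) : Belief.IsConcave (P.H v s) :=
  Belief.IsConcave.finset_inf' (P.act_ne s) fun a _ =>
    Belief.IsConcave.sum fun y' _ => isConcave_sig_mul_hy hv y' s a

end SEP

theorem bellman_preserves_concavity_general {S Y M A : Type} [Fintype S] [Fintype Y] [Fintype M] [Fintype A]
    (P : SEP S Y M A)
    (v : S → Belief M → ℝ)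
    (hconc : ∀ (s : S) (b₁ b₂ : Belief M) (t : ℝ) (ht0 : 0 ≤ t) (ht1 : t ≤ 1),
      t * v s b₁ + (1 - t) * v s b₂ ≤ v s (Belief.conv t ht0 ht1 b₁ b₂)) :
    ∀ (s : S) (b₁ b₂ : Belief M) (t : ℝ) (ht0 : 0 ≤ t) (ht1 : t ≤ 1),
      t * P.H v s b₁ + (1 - t) * P.H v s b₂ ≤ P.H v s (Belief.conv t ht0 ht1 b₁ b₂) :=
  SEP.isConcave_H hconc

/-- **One-step preservation of concavity by the Bellman operator.** If the
bounded function `v` is concave in the belief argument for every state, then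
so is `H v`. -/
theorem bellman_preserves_concavity {S Y M A : Type} [Fintype S] [Fintype Y] [Fintype M] [Fintype A]
    [Nonempty S] [Nonempty Y] [Nonempty M] [Nonempty A]
    (P : SEP S Y M A)
    (v : S → Belief M → ℝ) (hbdd : SEP.Bdd v)
    (hconc : ∀ (s : S) (b₁ b₂ : Belief M) (t : ℝ) (ht0 : 0 ≤ t) (ht1 : t ≤ 1),
      t * v s b₁ + (1 - t) * v s b₂ ≤ v s (Belief.conv t ht0 ht1 b₁ b₂)) :
    ∀ (s : S) (b₁ b₂ : Belief M) (t : ℝ) (ht0 : 0 ≤ t) (ht1 : t ≤ 1),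
      t * P.H v s b₁ + (1 - t) * P.H v s b₂ ≤ P.H v s (Belief.conv t ht0 ht1 b₁ b₂) :=
  bellman_preserves_concavity_general P v hconc
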